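/- For all integers m ≥ 2 and l ≥ 0, X_{L(Tp_{m,l})} = 2·X_{Tp_{m,l}} − X_{C_m}·X_{P_l}. -/

import Mathlib

open Finset

noncomputable section

/-- The ring in which symmetric functions live: formal power series in the
countably many commuting variables `x_0, x_1, x_2, …` with rational coefficients. -/
abbrev SymFun : Type := MvPowerSeries ℕ ℚ

/-- The chromatic symmetric function of a finite graph `G`: the coefficient of
the monomial `∏ i, x_i ^ d i` is the number of proper colorings `κ : V → ℕ`
whose color-class sizes are prescribed by `d`. -/
def csf {V : Type} [Fintype V] (G : SimpleGraph V) : SymFun :=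
  fun d => (Nat.card {κ : V → ℕ //
    (∀ v w : V, G.Adj v w → κ v ≠ κ w) ∧
    ∀ i : ℕ, Nat.card {v : V // κ v = i} = d i} : ℚ)

/-- The path `P_n` on `n` vertices. -/
def pathG (n : ℕ) : SimpleGraph (Fin n) :=
  SimpleGraph.fromRel (fun i j => (i : ℕ) + 1 = (j : ℕ))

/-- The cycle `C_n` on `n` vertices (for `n = 2` this is the single edge `K₂`). -/
def cycleG (n : ℕ) : SimpleGraph (Fin n) :=
  SimpleGraph.fromRel (fun i j => ((i : ℕ) + 1) % n = (j : ℕ))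

/-- The tadpole `Tp_{m,l}`: the disjoint union of the cycle `C_m` and the path `P_l`
together with one edge joining a vertex of the cycle to an end of the path. -/
def tadpole (m l : ℕ) : SimpleGraph (Fin m ⊕ Fin l) :=
  SimpleGraph.fromRel (fun a b =>
    match a, b with
    | Sum.inl i, Sum.inl j => ((i : ℕ) + 1) % m = (j : ℕ)
    | Sum.inr i, Sum.inr j => (i : ℕ) + 1 = (j : ℕ)
    | Sum.inl i, Sum.inr j => (i : ℕ) = 0 ∧ (j : ℕ) = 0
    | _, _ => False)

/-- The line graph of the tadpole `Tp_{m,l}`, described explicitly: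
the disjoint union of the cycle `C_m` and the path `P_l` together with two edges
joining an end `w` of the path to two adjacent vertices `u, v` of the cycle. -/
def lineTadpole (m l : ℕ) : SimpleGraph (Fin m ⊕ Fin l) :=
  SimpleGraph.fromRel (fun a b =>
    match a, b with
    | Sum.inl i, Sum.inl j => ((i : ℕ) + 1) % m = (j : ℕ)
    | Sum.inr i, Sum.inr j => (i : ℕ) + 1 = (j : ℕ)
    | Sum.inl i, Sum.inr j => ((i : ℕ) = 0 ∨ (i : ℕ) = 1) ∧ (j : ℕ) = 0
    | _, _ => False)

/-- The cycle-chord graph `CC_{a,b}`: the cycle `C_{a+b}` on vertices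
`v_0, …, v_{a+b-1}` together with the chord `v_0 v_a`. -/
def cycleChord (a b : ℕ) : SimpleGraph (Fin (a + b)) :=
  SimpleGraph.fromRel (fun i j =>
    ((i : ℕ) + 1) % (a + b) = (j : ℕ) ∨ ((i : ℕ) = 0 ∧ (j : ℕ) = a))

open Classical in
/-- The elementary symmetric function `e_r`. -/
def eSym (r : ℕ) : SymFun :=
  fun d => if (∀ i, d i ≤ 1) ∧ (d.sum fun _ k => k) = r then 1 else 0

open Classical in
/-- The power sum symmetric function `p_n = Σ_i x_i^n` (for `n ≥ 1`). -/
def pSym (n : ℕ) : SymFun :=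
  fun d => if n ≠ 0 ∧ ∃ i : ℕ, d = Finsupp.single i n then 1 else 0

/-- `e_λ = e_{λ_1} ⋯ e_{λ_k}` for a partition `λ` of `n`. -/
def eProd {n : ℕ} (P : n.Partition) : SymFun := (P.parts.map eSym).prod

/-- The ring of formal power series in two variables `x = X 0` and `y = X 1`
over the ring of symmetric functions. -/
abbrev Big : Type := MvPowerSeries (Fin 2) SymFun

/-- The bivariate generating function `Σ_{a,b ≥ 0} c a b · x^a y^b`. -/
def gf2 (c : ℕ → ℕ → SymFun) : Big := fun d => c (d 0) (d 1)

/-- The variable `x`. -/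
def Xv : Big := MvPowerSeries.X 0
/-- The variable `y`. -/
def Yv : Big := MvPowerSeries.X 1

/-- `E(z) = Σ_{n≥0} e_n z^n`, where `z` is the variable `X v`. -/
def Eser (v : Fin 2) : Big :=
  fun d => if ∀ w, w ≠ v → d w = 0 then eSym (d v) else 0

/-- `E'(z) = Σ_{n≥0} (n+1) e_{n+1} z^n`. -/
def Eser' (v : Fin 2) : Big :=
  fun d => if ∀ w, w ≠ v → d w = 0 then ((d v + 1 : ℕ) : SymFun) * eSym (d v + 1) else 0

/-- `E''(z) = Σ_{n≥0} (n+1)(n+2) e_{n+2} z^n`. -/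
def Eser'' (v : Fin 2) : Big :=
  fun d => if ∀ w, w ≠ v → d w = 0 then (((d v + 1) * (d v + 2) : ℕ) : SymFun) * eSym (d v + 2) else 0

/-- `F(z) = E(z) - z E'(z) = Σ_{n≥0} (1-n) e_n z^n`. -/
def Fser (v : Fin 2) : Big :=
  fun d => if ∀ w, w ≠ v → d w = 0 then eSym (d v) - ((d v : ℕ) : SymFun) * eSym (d v) else 0

/-- The partial derivative of a bivariate series with respect to the variable `X v`. -/
def pderiv2 (v : Fin 2) (f : Big) : Big :=
  fun d => ((d v + 1 : ℕ) : SymFun) * f (d + Finsupp.single v 1)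

/-!
Let `B = C_m ⊔ P_l`, let `uv` be the cycle edge at which the path end `w` is attached in
`L(Tp_{m,l})`, and write `B + e` for `B` with the edge `e` added. A proper colouring of `B`
separates `u` from `v`, so it separates `w` from `u` or from `v`; inclusion–exclusion on proper
colourings (triple deletion) gives `X_{B+uw+vw} + X_B = X_{B+uw} + X_{B+vw}`. Here
`B + uw + vw = L(Tp_{m,l})`, both `B + uw` and `B + vw` are the tadpole (a reflection of the
cycle swaps `u` and `v`), and `X_B = X_{C_m} X_{P_l}` since chromatic symmetric functions are
multiplicative on disjoint unions. For `l = 0` all three graphs are `C_m`.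
-/

namespace SimpleGraph

variable {V W : Type}

def IsProperColoring (G : SimpleGraph V) (κ : V → ℕ) : Prop :=
  ∀ v w, G.Adj v w → κ v ≠ κ w

lemma isProperColoring_sup {G H : SimpleGraph V} {κ : V → ℕ} :
    (G ⊔ H).IsProperColoring κ ↔ G.IsProperColoring κ ∧ H.IsProperColoring κ := by
  simp only [IsProperColoring, sup_adj, or_imp, forall_and]

lemma isProperColoring_edge {u w : V} {κ : V → ℕ} :
    (edge u w).IsProperColoring κ ↔ (u ≠ w → κ u ≠ κ w) := by
  simp only [IsProperColoring, edge_adj]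
  grind

lemma isProperColoring_sum_elim {G : SimpleGraph V} {H : SimpleGraph W} {κ₁ : V → ℕ}
    {κ₂ : W → ℕ} :
    (G ⊕g H).IsProperColoring (Sum.elim κ₁ κ₂) ↔
      G.IsProperColoring κ₁ ∧ H.IsProperColoring κ₂ := by
  simp only [IsProperColoring, Sum.forall, sum_adj_inl, sum_adj_inr, Sum.elim_inl, Sum.elim_inr]
  grind [SimpleGraph.sum]

lemma isProperColoring_comp_iso {G : SimpleGraph V} {H : SimpleGraph W} (e : G ≃g H)
    {κ : V → ℕ} : H.IsProperColoring (κ ∘ e.symm) ↔ G.IsProperColoring κ := by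
  refine ⟨fun h v w hvw => ?_, fun h v w hvw => h _ _ (e.symm.map_adj_iff.2 hvw)⟩
  simpa using h _ _ (e.map_adj_iff.2 hvw)

def Iso.supEdge {G : SimpleGraph V} {G' : SimpleGraph W} (σ : G ≃g G') (a b : V) :
    G ⊔ edge a b ≃g G' ⊔ edge (σ a) (σ b) where
  toEquiv := σ.toEquiv
  map_rel_iff' {x y} := by
    change (G' ⊔ edge (σ a) (σ b)).Adj (σ x) (σ y) ↔ _
    simp only [sup_adj, edge_adj, σ.map_adj_iff, σ.injective.eq_iff, ne_eq]

end SimpleGraph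

open SimpleGraph

def colorClassSizes {V : Type} [Fintype V] (κ : V → ℕ) : ℕ →₀ ℕ :=
  ∑ v, Finsupp.single (κ v) 1

section ColorClassSizes

variable {V W : Type} [Fintype V] [Fintype W]

lemma colorClassSizes_apply (κ : V → ℕ) (i : ℕ) :
    colorClassSizes κ i = Nat.card {v // κ v = i} := by
  classical
  simp [colorClassSizes, Finsupp.finsetSum_apply, Finsupp.single_apply, Finset.sum_boole,
    Nat.card_eq_fintype_card, Fintype.card_subtype]

lemma colorClassSizes_sum_elim (κ₁ : V → ℕ) (κ₂ : W → ℕ) :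
    colorClassSizes (Sum.elim κ₁ κ₂) = colorClassSizes κ₁ + colorClassSizes κ₂ :=
  Fintype.sum_sum_type _

lemma colorClassSizes_comp_equiv (e : V ≃ W) (κ : V → ℕ) :
    colorClassSizes (κ ∘ e.symm) = colorClassSizes κ :=
  e.symm.sum_comp fun v => Finsupp.single (κ v) 1

lemma finite_setOf_colorClassSizes_eq (d : ℕ →₀ ℕ) :
    {κ : V → ℕ | colorClassSizes κ = d}.Finite := by
  refine (Set.Finite.pi' fun _ => d.support.finite_toSet).subset
    fun κ (hκ : colorClassSizes κ = d) v => ?_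
  rw [Finset.mem_coe, Finsupp.mem_support_iff, ← hκ, colorClassSizes_apply]
  exact Nat.card_pos_iff.2 ⟨⟨⟨v, rfl⟩⟩, inferInstance⟩ |>.ne'

end ColorClassSizes

lemma Nat.card_subtype_add_eq_sum_antidiagonal {α β M : Type*} [AddMonoid M] [HasAntidiagonal M]
    {P : α → Prop} {Q : β → Prop} {f : α → M} {g : β → M}
    (hf : ∀ m, {a | f a = m}.Finite) (hg : ∀ m, {b | g b = m}.Finite) (d : M) :
    Nat.card {q : α × β // (P q.1 ∧ Q q.2) ∧ f q.1 + g q.2 = d}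
      = ∑ p ∈ antidiagonal d,
          Nat.card {a // P a ∧ f a = p.1} * Nat.card {b // Q b ∧ g b = p.2} := by
  have (p : M) : Finite {a // P a ∧ f a = p} := ((hf p).subset fun _ h => h.2).to_subtype
  have (p : M) : Finite {b // Q b ∧ g b = p} := ((hg p).subset fun _ h => h.2).to_subtype
  let e : {q : α × β // (P q.1 ∧ Q q.2) ∧ f q.1 + g q.2 = d} ≃
      Σ p : antidiagonal d, {a // P a ∧ f a = p.1.1} × {b // Q b ∧ g b = p.1.2} :=
    { toFun q := ⟨⟨(f q.1.1, g q.1.2), mem_antidiagonal.2 q.2.2⟩,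
        ⟨q.1.1, q.2.1.1, rfl⟩, ⟨q.1.2, q.2.1.2, rfl⟩⟩
      invFun x := ⟨(x.2.1.1, x.2.2.1), ⟨x.2.1.2.1, x.2.2.2.1⟩, by
        rw [x.2.1.2.2, x.2.2.2.2]; exact mem_antidiagonal.1 x.1.2⟩
      left_inv _ := rfl
      right_inv := by
        rintro ⟨⟨⟨m₁, m₂⟩, _⟩, ⟨a, _, h₁⟩, ⟨b, _, h₂⟩⟩
        dsimp only at h₁ h₂
        subst h₁ h₂
        rfl }
  rw [Nat.card_congr e, Nat.card_sigma, ← Finset.sum_coe_sort (antidiagonal d)]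
  simp only [Nat.card_prod]

section Csf

variable {V W : Type} [Fintype V] [Fintype W]

lemma csf_apply (G : SimpleGraph V) (d : ℕ →₀ ℕ) :
    csf G d = Nat.card {κ : V → ℕ // G.IsProperColoring κ ∧ colorClassSizes κ = d} := by
  simp only [csf, Finsupp.ext_iff, colorClassSizes_apply]
  rfl

lemma csf_congr {G : SimpleGraph V} {H : SimpleGraph W} (e : G ≃g H) : csf G = csf H := by
  ext d
  simp only [MvPowerSeries.coeff_apply, csf_apply]
  refine congrArg Nat.cast (Nat.card_congr ((e.toEquiv.arrowCongr (Equiv.refl ℕ)).subtypeEquiv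
    fun κ => ?_))
  change _ ↔ H.IsProperColoring (κ ∘ e.toEquiv.symm) ∧
    colorClassSizes (κ ∘ e.toEquiv.symm) = d
  rw [colorClassSizes_comp_equiv]
  exact and_congr_left' (isProperColoring_comp_iso e).symm

lemma csf_sum (G : SimpleGraph V) (H : SimpleGraph W) : csf (G ⊕g H) = csf G * csf H := by
  ext d
  rw [MvPowerSeries.coeff_mul]
  simp only [MvPowerSeries.coeff_apply, csf_apply]
  rw [← Nat.card_congr ((Equiv.sumArrowEquivProdArrow V W ℕ).symm.subtypeEquiv fun q => ?_),
    Nat.card_subtype_add_eq_sum_antidiagonal finite_setOf_colorClassSizes_eq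
      finite_setOf_colorClassSizes_eq]
  · push_cast
    rfl
  · simp [Equiv.sumArrowEquivProdArrow, isProperColoring_sum_elim, colorClassSizes_sum_elim]

lemma csf_sup_edge_sup_edge_add_csf {G : SimpleGraph V} {u v : V} (huv : G.Adj u v) (w : V) :
    csf (G ⊔ edge u w ⊔ edge v w) + csf G = csf (G ⊔ edge u w) + csf (G ⊔ edge v w) := by
  ext d
  let S (H : SimpleGraph V) : Set (V → ℕ) :=
    {κ | H.IsProperColoring κ ∧ colorClassSizes κ = d}
  have hS (H : SimpleGraph V) : csf H d = (S H).ncard := csf_apply H d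
  have hfin (H : SimpleGraph V) : (S H).Finite :=
    (finite_setOf_colorClassSizes_eq d).subset fun _ h => h.2
  have hinter : S (G ⊔ edge u w ⊔ edge v w) = S (G ⊔ edge u w) ∩ S (G ⊔ edge v w) := by
    ext κ
    simp only [S, Set.mem_inter_iff, Set.mem_ofPred_eq, isProperColoring_sup]
    tauto
  have hunion : S G = S (G ⊔ edge u w) ∪ S (G ⊔ edge v w) := by
    ext κ
    simp only [S, Set.mem_union, Set.mem_ofPred_eq, isProperColoring_sup, isProperColoring_edge]
    constructor
    · rintro ⟨hG, hd⟩
      by_cases huw : κ u = κ w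
      · exact .inr ⟨⟨hG, fun _ => huw ▸ (hG u v huv).symm⟩, hd⟩
      · exact .inl ⟨⟨hG, fun _ => huw⟩, hd⟩
    · rintro (⟨⟨hG, -⟩, hd⟩ | ⟨⟨hG, -⟩, hd⟩) <;> exact ⟨hG, hd⟩
  simp only [map_add, MvPowerSeries.coeff_apply, hS, hinter, hunion]
  exact_mod_cast Set.ncard_inter_add_ncard_union _ _ (hfin _) (hfin _)

end Csf

lemma cycleG_adj {m : ℕ} [NeZero m] {i j : Fin m} :
    (cycleG m).Adj i j ↔ i ≠ j ∧ (i + 1 = j ∨ j + 1 = i) := by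
  simp only [cycleG, fromRel_adj, Fin.ext_iff, Fin.val_add, Fin.val_one', Nat.add_mod_mod]

def cycleReflection (m : ℕ) [NeZero m] (c : Fin m) : cycleG m ≃g cycleG m where
  toEquiv := Equiv.subLeft c
  map_rel_iff' {i j} := by
    have hstep (x y : Fin m) : c - x + 1 = c - y ↔ y + 1 = x := by
      rw [sub_add_eq_add_sub, sub_eq_sub_iff_add_eq_add, add_assoc, add_left_cancel_iff, add_comm]
    simp only [cycleG_adj, Equiv.subLeft_apply, ne_eq, sub_right_inj, hstep, or_comm]

lemma tadpole_zero (m : ℕ) : tadpole m 0 = cycleG m ⊕g pathG 0 := by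
  ext (i | i) (j | j) <;> first | exact i.elim0 | exact j.elim0 | simp [tadpole, cycleG]

lemma lineTadpole_zero (m : ℕ) : lineTadpole m 0 = cycleG m ⊕g pathG 0 := by
  ext (i | i) (j | j) <;> first | exact i.elim0 | exact j.elim0 | simp [lineTadpole, cycleG]

lemma tadpole_succ (m l : ℕ) [NeZero m] :
    tadpole m (l + 1) = (cycleG m ⊕g pathG (l + 1)) ⊔ edge (.inl 0) (.inr 0) := by
  ext (i | i) (j | j) <;>
    simp [tadpole, cycleG, pathG, edge_adj, Fin.val_eq_zero_iff, and_comm]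

lemma lineTadpole_succ (n l : ℕ) :
    lineTadpole (n + 2) (l + 1) = tadpole (n + 2) (l + 1) ⊔ edge (.inl 1) (.inr 0) := by
  have hone (i : Fin (n + 2)) : (i : ℕ) = 1 ↔ i = 1 := by simp [Fin.ext_iff]
  ext (i | i) (j | j) <;>
    simp [tadpole, lineTadpole, edge_adj, Fin.val_eq_zero_iff, hone] <;> tauto

theorem lineTadpole_csf_tadpole (m l : ℕ) (hm : 2 ≤ m) :
    csf (lineTadpole m l) = 2 * csf (tadpole m l) - csf (cycleG m) * csf (pathG l) := by
  obtain ⟨n, rfl⟩ : ∃ n, m = n + 2 := ⟨m - 2, by omega⟩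
  cases l with
  | zero =>
    rw [lineTadpole_zero, tadpole_zero, csf_sum]
    ring
  | succ l =>
    set B := cycleG (n + 2) ⊕g pathG (l + 1)
    have hadj : B.Adj (.inl 0) (.inl 1) := by simp [B, cycleG_adj]
    have hreflect : csf (B ⊔ edge (.inl 1) (.inr 0)) = csf (tadpole (n + 2) (l + 1)) := by
      rw [tadpole_succ, csf_congr ((Iso.sumCongr (cycleReflection _ 1) .refl).supEdge _ _)]
      simp [cycleReflection]
    have htriple := csf_sup_edge_sup_edge_add_csf hadj (.inr 0)
    rw [← tadpole_succ, ← lineTadpole_succ, hreflect, csf_sum] at htriple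
    linear_combination htriple
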